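/- arXiv:1507.06506 — 4 statements merged into one kernel-verified Lean document; each statement's English description precedes it below -/
import Mathlib

section
/- Let d ≥ 1 and m ≥ 1 be integers and let ν be a Borel measure on (ℝ^d)^m. Suppose there exist constants κ ≥ 0 and T > 0 such that for every t ≥ T the lower Lebesgue integral satisfies ∫⁻_{x ∈ [−t,t]^d} ν({y ∈ (ℝ^d)^m : y_i + x ∈ [−t,t]^d for all i = 1,…,m}) dx ≤ κ·t^d. Then ν is a finite measure; more precisely ν((ℝ^d)^m) ≤ κ. -/
/-!
If `y` lies in the cube of half-width `r` and `x` in the cube of half-width `t - r`, then every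
`y i + x` lies in the cube of half-width `t`. So the integrand is at least `ν [-r, r]^{dm}` on a
cube of volume `(2(t - r))^d ≥ t^d` once `t ≥ 2r`, giving `ν [-r, r]^{dm} ≤ κ`; these cubes
exhaust the space. Cubes centred at `0` are the closed balls of the sup norm.
-/

open MeasureTheory Metric Set

theorem pi_closedBall_zero_eq_Icc {ι : Type*} [Fintype ι] {r : ℝ} (hr : 0 ≤ r) :
    closedBall (0 : ι → ℝ) r = Icc (fun _ => -r) (fun _ => r) := by
  rw [closedBall_pi _ hr, ← pi_univ_Icc]
  simp only [Pi.zero_apply, Real.closedBall_zero_eq_Icc]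

theorem measure_univ_le_of_forall_closedBall_le {E : Type*} [PseudoMetricSpace E]
    [MeasurableSpace E] {μ : Measure E} (x : E) {c : ENNReal}
    (h : ∀ r > 0, μ (closedBall x r) ≤ c) : μ univ ≤ c := by
  have hmono : Monotone fun n : ℕ => ball x (n + 1) := fun a b hab =>
    ball_subset_ball (by gcongr)
  rw [← iUnion_ball_nat_succ x, hmono.directed_le.measure_iUnion]
  exact iSup_le fun n => (measure_mono ball_subset_closedBall).trans (h _ n.cast_add_one_pos)

section
variable {ι E : Type*} [Fintype ι] [SeminormedAddCommGroup E]

theorem closedBall_subset_setOf_forall_add_mem_closedBall {r t : ℝ} {x : E}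
    (hx : x ∈ closedBall (0 : E) (t - r)) :
    closedBall (0 : ι → E) r ⊆ {y | ∀ i, y i + x ∈ closedBall (0 : E) t} := by
  intro y hy i
  rw [mem_closedBall_zero_iff] at *
  calc ‖y i + x‖ ≤ ‖y i‖ + ‖x‖ := norm_add_le _ _
    _ ≤ r + (t - r) := add_le_add ((norm_le_pi_norm y i).trans hy) hx
    _ = t := by ring

variable [MeasurableSpace E] [OpensMeasurableSpace E]

theorem measure_closedBall_mul_le_setLIntegral_translate (μ : Measure E) (ν : Measure (ι → E))
    {r : ℝ} (hr : 0 ≤ r) (t : ℝ) :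
    ν (closedBall 0 r) * μ (closedBall 0 (t - r)) ≤
      ∫⁻ x in closedBall 0 t, ν {y | ∀ i, y i + x ∈ closedBall (0 : E) t} ∂μ :=
  calc ν (closedBall 0 r) * μ (closedBall 0 (t - r))
      = ∫⁻ _ in closedBall 0 (t - r), ν (closedBall 0 r) ∂μ := (setLIntegral_const _ _).symm
    _ ≤ ∫⁻ x in closedBall 0 (t - r), ν {y | ∀ i, y i + x ∈ closedBall (0 : E) t} ∂μ :=
      setLIntegral_mono' measurableSet_closedBall fun _ hx =>
        measure_mono (closedBall_subset_setOf_forall_add_mem_closedBall hx)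
    _ ≤ _ := lintegral_mono_set (closedBall_subset_closedBall (by linarith))

end

theorem measure_closedBall_le_of_setLIntegral_translate_le {ι α : Type*} [Fintype ι] [Fintype α]
    (ν : Measure (ι → α → ℝ)) {κ r t : ℝ} (hr : 0 < r) (hrt : 2 * r ≤ t)
    (h : ∫⁻ x in closedBall 0 t, ν {y | ∀ i, y i + x ∈ closedBall (0 : α → ℝ) t} ≤
      ENNReal.ofReal (κ * t ^ Fintype.card α)) :
    ν (closedBall 0 r) ≤ ENNReal.ofReal κ := by
  have ht : 0 < t := by linarith
  have key := (measure_closedBall_mul_le_setLIntegral_translate volume ν hr.le t).trans h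
  rw [Real.volume_pi_closedBall 0 (by linarith), ENNReal.ofReal_mul' (by positivity)] at key
  have htpos : ENNReal.ofReal (t ^ Fintype.card α) ≠ 0 := by
    simp only [ne_eq, ENNReal.ofReal_eq_zero, not_le]; positivity
  refine (ENNReal.mul_le_mul_iff_left htpos ENNReal.ofReal_ne_top).mp ?_
  -- `t ≥ 2 r` makes the cube of half-width `t - r` at least as large as `t ^ d`.
  calc ν (closedBall 0 r) * ENNReal.ofReal (t ^ Fintype.card α)
      ≤ ν (closedBall 0 r) * ENNReal.ofReal ((2 * (t - r)) ^ Fintype.card α) := by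
        gcongr; linarith
    _ ≤ _ := key

theorem measure_finite_of_translate_bound_general (d m : ℕ)
    (ν : Measure (Fin m → Fin d → ℝ)) (κ T : ℝ)
    (h : ∀ t : ℝ, T ≤ t →
      (∫⁻ x in Set.Icc (fun _ : Fin d => -t) (fun _ => t),
        ν {y : Fin m → Fin d → ℝ |
            ∀ i, y i + x ∈ Set.Icc (fun _ : Fin d => -t) (fun _ => t)})
        ≤ ENNReal.ofReal (κ * t ^ d)) :
    ν Set.univ ≤ ENNReal.ofReal κ := by
  refine measure_univ_le_of_forall_closedBall_le 0 fun r hr => ?_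
  have hrt : 2 * r ≤ max T (2 * r) := le_max_right _ _
  refine measure_closedBall_le_of_setLIntegral_translate_le ν hr hrt ?_
  simpa [pi_closedBall_zero_eq_Icc (hr.le.trans (by linarith) : 0 ≤ max T (2 * r))] using
    h _ (le_max_left _ _)

/-- Finiteness criterion for measures on `(ℝ^d)^m`: if for all large `t` the integral over
`x ∈ [−t,t]^d` of `ν {y | ∀ i, y i + x ∈ [−t,t]^d}` is at most `κ t^d`, then `ν` is a finite
measure with total mass at most `κ`. -/
theorem measure_finite_of_translate_bound (d m : ℕ) (hd : 1 ≤ d) (hm : 1 ≤ m)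
    (ν : Measure (Fin m → Fin d → ℝ)) (κ T : ℝ) (hκ : 0 ≤ κ) (hT : 0 < T)
    (h : ∀ t : ℝ, T ≤ t →
      (∫⁻ x in Set.Icc (fun _ : Fin d => -t) (fun _ => t),
        ν {y : Fin m → Fin d → ℝ |
            ∀ i, y i + x ∈ Set.Icc (fun _ : Fin d => -t) (fun _ => t)})
        ≤ ENNReal.ofReal (κ * t ^ d)) :
    ν Set.univ ≤ ENNReal.ofReal κ :=
  measure_finite_of_translate_bound_general d m ν κ T h
end

section
/- Let T > 0 and let k : ℝ → ℝ be an integrable function with k(−u) = k(u) for all u ∈ ℝ, k(u) = 0 whenever |u| > T, and ∫_ℝ k(u) du = 1. Let r ∈ ℝ, b > 0 and M ≥ 0, and let f : ℝ → ℝ be twice differentiable on the interval [r − Tb, r + Tb] with |f''(s)| ≤ M for all s ∈ [r − Tb, r + Tb]. Then |∫_ℝ k(u) f(r + ub) du − f(r)| ≤ b² · M · ∫_ℝ u² |k(u)| du. -/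
/-!
Write `g u = f (r + u b)`. The mean value theorem applied twice gives the Taylor bound
`|g u - g 0 - f' r b u| ≤ b² M u²` wherever `k u ≠ 0`. Since `∫ k = 1` and, by the symmetry
of `k`, `∫ u k(u) du = 0`, the bias `∫ k g - g 0` is the integral of `k` against this
remainder.
-/

open MeasureTheory Set

theorem Convex.abs_sub_sub_mul_sub_le_mul_sq {s : Set ℝ} (hs : Convex ℝ s)
    {f f' f'' : ℝ → ℝ} {M x y : ℝ} (hf : ∀ t ∈ s, HasDerivWithinAt f (f' t) s t)
    (hf' : ∀ t ∈ s, HasDerivWithinAt f' (f'' t) s t) (hM : ∀ t ∈ s, |f'' t| ≤ M)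
    (hx : x ∈ s) (hy : y ∈ s) :
    |f y - f x - f' x * (y - x)| ≤ M * (y - x) ^ 2 := by
  have hJ : uIcc x y ⊆ s := hs.ordConnected.uIcc_subset hx hy
  have hM₀ : 0 ≤ M := (abs_nonneg _).trans (hM x hx)
  have hf'_le : ∀ t ∈ uIcc x y, ‖f' t - f' x‖ ≤ M * |y - x| := fun t ht =>
    calc ‖f' t - f' x‖ ≤ M * ‖t - x‖ :=
          hs.norm_image_sub_le_of_norm_hasDerivWithin_le hf' hM hx (hJ ht)
      _ ≤ M * |y - x| := by gcongr; exact abs_sub_left_of_mem_uIcc ht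
  have hg : ∀ t ∈ uIcc x y,
      HasDerivWithinAt (fun t => f t - f' x * t) (f' t - f' x) (uIcc x y) t := fun t ht => by
    simpa using ((hf t (hJ ht)).mono hJ).fun_sub ((hasDerivWithinAt_id t _).const_mul (f' x))
  calc |f y - f x - f' x * (y - x)| = ‖(f y - f' x * y) - (f x - f' x * x)‖ := by
        rw [Real.norm_eq_abs]; ring_nf
    _ ≤ M * |y - x| * ‖y - x‖ := (convex_uIcc x y).norm_image_sub_le_of_norm_hasDerivWithin_le
        hg hf'_le left_mem_uIcc right_mem_uIcc
    _ = M * (y - x) ^ 2 := by rw [Real.norm_eq_abs, mul_assoc, ← sq, sq_abs]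

theorem integral_eq_zero_of_odd {G E : Type*} [MeasurableSpace G] [AddGroup G] [MeasurableNeg G]
    [NormedAddCommGroup E] [NormedSpace ℝ E] {μ : Measure G} [μ.IsNegInvariant] {f : G → E}
    (hf : Function.Odd f) : ∫ x, f x ∂μ = 0 := by
  have h := integral_neg_eq_self f μ
  simp only [hf _, integral_neg] at h
  have h_two : (2 : ℝ) • ∫ x, f x ∂μ = 0 := by
    rw [two_smul]; nth_rewrite 1 [← h]; exact neg_add_cancel _
  exact (smul_eq_zero.mp h_two).resolve_left two_ne_zero

theorem abs_setIntegral_mul_sub_le_of_taylor {μ : Measure ℝ} {K : Set ℝ} (hK : IsCompact K)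
    {k g : ℝ → ℝ} {c M : ℝ} (hk : IntegrableOn k K μ) (hk_one : ∫ u in K, k u ∂μ = 1)
    (hk_moment : ∫ u in K, u * k u ∂μ = 0) (hg : ContinuousOn g K)
    (hg_taylor : ∀ u ∈ K, |g u - g 0 - c * u| ≤ M * u ^ 2) :
    |(∫ u in K, k u * g u ∂μ) - g 0| ≤ M * ∫ u in K, u ^ 2 * |k u| ∂μ := by
  have hkg : IntegrableOn (fun u => k u * g u) K μ := hk.mul_continuousOn hg hK
  have huk : IntegrableOn (fun u => u * k u) K μ := .continuousOn_mul continuousOn_id hk hK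
  have hu2k : IntegrableOn (fun u => u ^ 2 * |k u|) K μ :=
    .continuousOn_mul (continuousOn_id.pow 2) hk.norm hK
  have hbias : (∫ u in K, k u * g u ∂μ) - g 0
      = ∫ u in K, k u * (g u - g 0 - c * u) ∂μ := by
    have hkg' : IntegrableOn (fun u => k u * g u - g 0 * k u) K μ := hkg.sub (hk.const_mul _)
    calc (∫ u in K, k u * g u ∂μ) - g 0
        = (∫ u in K, k u * g u ∂μ) - g 0 * (∫ u in K, k u ∂μ)
            - c * ∫ u in K, u * k u ∂μ := by
          rw [hk_one, hk_moment]; ring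
      _ = ∫ u in K, k u * g u - g 0 * k u - c * (u * k u) ∂μ := by
          rw [integral_sub hkg' (huk.const_mul c), integral_sub hkg (hk.const_mul _),
            integral_const_mul, integral_const_mul]
      _ = ∫ u in K, k u * (g u - g 0 - c * u) ∂μ := by congr 1; funext u; ring
  rw [hbias, ← integral_const_mul, ← Real.norm_eq_abs]
  refine norm_integral_le_of_norm_le (hu2k.const_mul M)
    (ae_restrict_of_forall_mem hK.measurableSet fun u hu => ?_)
  calc ‖k u * (g u - g 0 - c * u)‖ = |k u| * |g u - g 0 - c * u| := abs_mul _ _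
    _ ≤ |k u| * (M * u ^ 2) := by gcongr; exact hg_taylor u hu
    _ = M * (u ^ 2 * |k u|) := by ring

theorem kernel_smoothing_bias_bound_general (T : ℝ) (hT : 0 < T) (k : ℝ → ℝ)
    (hk_int : Integrable k)
    (hk_even : ∀ u, k (-u) = k u)
    (hk_supp : ∀ u : ℝ, T < |u| → k u = 0)
    (hk_one : (∫ u, k u) = 1)
    (r b M : ℝ) (hb : 0 < b)
    (f f' f'' : ℝ → ℝ)
    (hf' : ∀ s ∈ Set.Icc (r - T * b) (r + T * b),
      HasDerivWithinAt f (f' s) (Set.Icc (r - T * b) (r + T * b)) s)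
    (hf'' : ∀ s ∈ Set.Icc (r - T * b) (r + T * b),
      HasDerivWithinAt f' (f'' s) (Set.Icc (r - T * b) (r + T * b)) s)
    (hM' : ∀ s ∈ Set.Icc (r - T * b) (r + T * b), |f'' s| ≤ M) :
    |(∫ u, k u * f (r + u * b)) - f r| ≤ b ^ 2 * M * ∫ u, u ^ 2 * |k u| := by
  have hk_zero : ∀ u ∉ Icc (-T) T, k u = 0 := fun u hu =>
    hk_supp u (not_le.mp fun h => hu (abs_le.mp h))
  have hmaps : MapsTo (fun u => r + u * b) (Icc (-T) T) (Icc (r - T * b) (r + T * b)) :=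
    fun u ⟨hu₁, hu₂⟩ => ⟨by nlinarith, by nlinarith⟩
  have hr : r ∈ Icc (r - T * b) (r + T * b) := by
    simpa using hmaps (x := 0) ⟨by linarith, by linarith⟩
  rw [← setIntegral_eq_integral_of_forall_compl_eq_zero hk_zero] at hk_one
  have hk_moment : ∫ u in Icc (-T) T, u * k u = 0 := by
    rw [setIntegral_eq_integral_of_forall_compl_eq_zero fun u hu => by simp [hk_zero u hu]]
    exact integral_eq_zero_of_odd fun u => by simp [hk_even]
  have hkf_restrict : ∫ u in Icc (-T) T, k u * f (r + u * b) = ∫ u, k u * f (r + u * b) :=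
    setIntegral_eq_integral_of_forall_compl_eq_zero fun u hu => by simp [hk_zero u hu]
  have hk2_restrict : ∫ u in Icc (-T) T, u ^ 2 * |k u| = ∫ u, u ^ 2 * |k u| :=
    setIntegral_eq_integral_of_forall_compl_eq_zero fun u hu => by simp [hk_zero u hu]
  have hf_cont : ContinuousOn f (Icc (r - T * b) (r + T * b)) := fun s hs =>
    (hf' s hs).continuousWithinAt
  have htaylor : ∀ u ∈ Icc (-T) T,
      |f (r + u * b) - f (r + 0 * b) - f' r * b * u| ≤ b ^ 2 * M * u ^ 2 := fun u hu => by
    have := (convex_Icc _ _).abs_sub_sub_mul_sub_le_mul_sq hf' hf'' hM' hr (hmaps hu)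
    ring_nf at this ⊢
    exact this
  rw [← hkf_restrict, ← hk2_restrict]
  simpa using abs_setIntegral_mul_sub_le_of_taylor isCompact_Icc
    hk_int.integrableOn hk_one hk_moment (hf_cont.comp (by fun_prop) hmaps) htaylor

/-- Taylor–Lagrange kernel-smoothing bias bound: for a symmetric integrable kernel `k`
supported in `[−T,T]` with `∫ k = 1`, and `f` twice differentiable on `[r − Tb, r + Tb]`
with `|f''| ≤ M` there, one has `|∫ k(u) f(r + ub) du − f(r)| ≤ b² M ∫ u² |k(u)| du`. -/
theorem kernel_smoothing_bias_bound (T : ℝ) (hT : 0 < T) (k : ℝ → ℝ)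
    (hk_int : Integrable k)
    (hk_even : ∀ u, k (-u) = k u)
    (hk_supp : ∀ u : ℝ, T < |u| → k u = 0)
    (hk_one : (∫ u, k u) = 1)
    (r b M : ℝ) (hb : 0 < b) (hM : 0 ≤ M)
    (f f' f'' : ℝ → ℝ)
    (hf' : ∀ s ∈ Set.Icc (r - T * b) (r + T * b),
      HasDerivWithinAt f (f' s) (Set.Icc (r - T * b) (r + T * b)) s)
    (hf'' : ∀ s ∈ Set.Icc (r - T * b) (r + T * b),
      HasDerivWithinAt f' (f'' s) (Set.Icc (r - T * b) (r + T * b)) s)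
    (hM' : ∀ s ∈ Set.Icc (r - T * b) (r + T * b), |f'' s| ≤ M) :
    |(∫ u, k u * f (r + u * b)) - f r| ≤ b ^ 2 * M * ∫ u, u ^ 2 * |k u| :=
  kernel_smoothing_bias_bound_general T hT k hk_int hk_even hk_supp hk_one r b M hb f f' f'' hf'
    hf'' hM'
end

section
/- Let d ≥ 1 be an integer, let 0 < r_min ≤ r_max, and set I = [r_min, r_max]. Let T > 0 and let k : ℝ → ℝ be a bounded integrable function with k(−u) = k(u) for all u, k(u) = 0 whenever |u| > T, and ∫_ℝ k(u) du = 1. Let g₀ : ℝ → ℝ be twice continuously differentiable on the open half-line (0, ∞). Then there exist b₀ > 0 and M ≥ 0 such that for every b ∈ (0, b₀] and every r ∈ I, |∫_0^∞ (t/r)^{d−1} · b^{−1} k((r−t)/b) · g₀(t) dt − g₀(r)| ≤ M · b². -/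
/-!
Write `φ(t) = t^(d-1) g₀(t)`. Since `k` vanishes outside `[-T, T]`, for `b ≤ rmin / (2T)` the
substitution `t = r - b u` turns the integral into `r^(1-d) ∫ k(u) φ(r - b u) du`, and only values
of `φ` on the compact interval `[rmin/2, rmax + rmin/2] ⊂ (0, ∞)` enter. There `φ` is `C²`, so
`φ(r - b u) = φ(r) - b u φ'(r) + O(b² u²)` uniformly; the constant term is reproduced because
`∫ k = 1`, the linear term integrates to zero because `k` is even, and the remainder is
`O(b² T² ∫ |k|)`.
-/

open MeasureTheory Set

lemma integral_mul_self_eq_zero_of_even {k : ℝ → ℝ} (hk : ∀ u, k (-u) = k u) :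
    ∫ u, u * k u = 0 := by
  have h := integral_neg_eq_self (fun u : ℝ => u * k u) volume
  simp only [hk, neg_mul, integral_neg] at h
  linarith

lemma MeasureTheory.Integrable.mul_of_continuousOn_Icc {k g : ℝ → ℝ} {T : ℝ} (hk : Integrable k)
    (hk_supp : ∀ u, T < |u| → k u = 0) (hg : ContinuousOn g (Icc (-T) T)) :
    Integrable fun u => k u * g u := by
  refine (hk.integrableOn.mul_continuousOn hg isCompact_Icc).integrable_of_forall_notMem_eq_zero
    fun u hu => ?_
  rw [hk_supp u (lt_abs.mpr ?_), zero_mul]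
  by_contra! h
  exact hu ⟨by linarith [h.2], h.1⟩

lemma Convex.abs_sub_sub_mul_le_of_lipschitz_deriv {f f' : ℝ → ℝ} {J : Set ℝ} {C : ℝ}
    (hC : 0 ≤ C) (hJ : Convex ℝ J) (hf : ∀ x ∈ J, HasDerivWithinAt f (f' x) J x)
    (hf' : ∀ x ∈ J, ∀ y ∈ J, |f' y - f' x| ≤ C * |y - x|) {r s : ℝ} (hr : r ∈ J) (hs : s ∈ J) :
    |f s - f r - f' r * (s - r)| ≤ C * (s - r) ^ 2 := by
  have hrs : uIcc r s ⊆ J := hJ.ordConnected.uIcc_subset hr hs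
  have hderiv : ∀ x ∈ uIcc r s,
      HasDerivWithinAt (fun x => f x - f' r * x) (f' x - f' r) (uIcc r s) x := fun x hx =>
    ((hf x (hrs hx)).mono hrs).fun_sub
      (((hasDerivWithinAt_id x _).const_mul (f' r)).congr_deriv (mul_one _))
  have hbound : ∀ x ∈ uIcc r s, ‖f' x - f' r‖ ≤ C * |s - r| := fun x hx =>
    calc ‖f' x - f' r‖ ≤ C * |x - r| := hf' r hr x (hrs hx)
      _ ≤ C * |s - r| := by gcongr ?_ * ?_; exact abs_sub_left_of_mem_uIcc hx
  have := (convex_uIcc r s).norm_image_sub_le_of_norm_hasDerivWithin_le hderiv hbound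
    left_mem_uIcc right_mem_uIcc
  rw [Real.norm_eq_abs, Real.norm_eq_abs, mul_assoc, abs_mul_abs_self, ← sq] at this
  convert this using 2
  ring

lemma ContDiffOn.exists_abs_sub_sub_deriv_mul_le {φ : ℝ → ℝ} {U J : Set ℝ} (hU : IsOpen U)
    (hφ : ContDiffOn ℝ 2 φ U) (hJU : J ⊆ U) (hJ : IsCompact J) (hJc : Convex ℝ J) :
    ∃ C, 0 ≤ C ∧ ∀ r ∈ J, ∀ s ∈ J, |φ s - φ r - deriv φ r * (s - r)| ≤ C * (s - r) ^ 2 := by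
  have hφ' : ContDiffOn ℝ 1 (deriv φ) U := hφ.deriv_of_isOpen hU (by norm_num)
  obtain ⟨C, hC⟩ := hJ.exists_bound_of_continuousOn
    ((hφ'.continuousOn_deriv_of_isOpen hU le_rfl).mono hJU)
  have hLip : ∀ x ∈ J, ∀ y ∈ J, |deriv φ y - deriv φ x| ≤ max C 0 * |y - x| := fun x hx y hy =>
    hJc.norm_image_sub_le_of_norm_hasDerivWithin_le
      (fun z hz => ((hφ'.differentiableOn one_ne_zero).differentiableAt
        (hU.mem_nhds (hJU hz))).hasDerivAt.hasDerivWithinAt)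
      (fun z hz => (hC z hz).trans (le_max_left _ _)) hx hy
  refine ⟨max C 0, le_max_right _ _, fun r hr s hs =>
    hJc.abs_sub_sub_mul_le_of_lipschitz_deriv (le_max_right _ _) (fun x hx => ?_) hLip hr hs⟩
  exact ((hφ.differentiableOn (by norm_num)).differentiableAt
    (hU.mem_nhds (hJU hx))).hasDerivAt.hasDerivWithinAt

lemma abs_integral_kernel_mul_comp_sub_le {k φ : ℝ → ℝ} {T b r a C : ℝ} (hb : 0 ≤ b)
    (hC : 0 ≤ C) (hk_int : Integrable k) (hk_even : ∀ u, k (-u) = k u)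
    (hk_supp : ∀ u, T < |u| → k u = 0) (hk_one : ∫ u, k u = 1)
    (hφ : ContinuousOn φ (Icc (r - b * T) (r + b * T)))
    (hφ_taylor : ∀ s ∈ Icc (r - b * T) (r + b * T), |φ s - φ r - a * (s - r)| ≤ C * (s - r) ^ 2) :
    |(∫ u, k u * φ (r - b * u)) - φ r| ≤ C * T ^ 2 * (∫ u, |k u|) * b ^ 2 := by
  have hmaps : MapsTo (fun u => r - b * u) (Icc (-T) T) (Icc (r - b * T) (r + b * T)) :=
    fun u hu => ⟨by nlinarith [hu.2], by nlinarith [hu.1]⟩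
  have hφb : ContinuousOn (fun u => φ (r - b * u)) (Icc (-T) T) :=
    hφ.comp (by fun_prop) hmaps
  have hkφ : Integrable fun u => k u * φ (r - b * u) :=
    hk_int.mul_of_continuousOn_Icc hk_supp hφb
  have hklin : Integrable fun u => k u * (φ r - a * b * u) :=
    hk_int.mul_of_continuousOn_Icc hk_supp (by fun_prop)
  have hlin : ∫ u, k u * (φ r - a * b * u) = φ r := by
    have hku : Integrable fun u => u * k u :=
      (hk_int.mul_of_continuousOn_Icc hk_supp continuousOn_id).congr
        (ae_of_all _ fun u => mul_comm _ _)
    calc ∫ u, k u * (φ r - a * b * u) = ∫ u, (k u * φ r - a * b * (u * k u)) := by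
          congr 1; ext u; ring
      _ = φ r := by
          rw [integral_sub (hk_int.mul_const _) (hku.const_mul (a * b)), integral_mul_const,
            hk_one, integral_const_mul, integral_mul_self_eq_zero_of_even hk_even]
          ring
  have hpt : ∀ u, |k u * φ (r - b * u) - k u * (φ r - a * b * u)|
      ≤ C * T ^ 2 * b ^ 2 * |k u| := fun u => by
    rcases le_or_gt |u| T with hu | hu
    · rw [← mul_sub, abs_mul, mul_comm]
      gcongr
      calc |φ (r - b * u) - (φ r - a * b * u)|
          = |φ (r - b * u) - φ r - a * (r - b * u - r)| := by ring_nf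
        _ ≤ C * (r - b * u - r) ^ 2 := hφ_taylor _ (hmaps (abs_le.mp hu))
        _ = C * b ^ 2 * |u| ^ 2 := by rw [sq_abs]; ring
        _ ≤ C * b ^ 2 * T ^ 2 := by gcongr
        _ = C * T ^ 2 * b ^ 2 := by ring
    · simp [hk_supp u hu]
  calc |(∫ u, k u * φ (r - b * u)) - φ r|
      = |∫ u, (k u * φ (r - b * u) - k u * (φ r - a * b * u))| := by
        rw [integral_sub hkφ hklin, hlin]
    _ ≤ ∫ u, C * T ^ 2 * b ^ 2 * |k u| := by
        simpa only [Real.norm_eq_abs] using norm_integral_le_of_norm_le (hk_int.abs.const_mul _)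
          (ae_of_all _ fun u => (Real.norm_eq_abs _).trans_le (hpt u))
    _ = C * T ^ 2 * (∫ u, |k u|) * b ^ 2 := by rw [integral_const_mul]; ring

lemma integral_inv_mul_kernel_div_mul_eq {k f : ℝ → ℝ} {b : ℝ} (hb : 0 < b) (r : ℝ) :
    ∫ t, b⁻¹ * k ((r - t) / b) * f t = ∫ u, k u * f (r - b * u) := by
  have hcomp : ∀ t, b⁻¹ * k ((r - t) / b) * f t
      = b⁻¹ * (fun u => k u * f (r - b * u)) ((r - t) / b) := fun t => by
    simp only [mul_div_cancel₀ _ hb.ne', sub_sub_cancel]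
    ring
  simp_rw [hcomp, integral_const_mul,
    integral_sub_left_eq_self (fun x => k (x / b) * f (r - b * (x / b))) volume r,
    Measure.integral_comp_div (fun u => k u * f (r - b * u)), abs_of_pos hb, smul_eq_mul,
    inv_mul_cancel_left₀ hb.ne']

lemma setIntegral_Ioi_pow_div_mul_kernel_eq (p : ℕ) {k g : ℝ → ℝ} {T b r : ℝ} (hb : 0 < b)
    (hbT : b * T < r) (hk_supp : ∀ u, T < |u| → k u = 0) :
    ∫ t in Ioi 0, (t / r) ^ p * (b⁻¹ * k ((r - t) / b)) * g t
      = (r ^ p)⁻¹ * ∫ u, k u * ((r - b * u) ^ p * g (r - b * u)) := by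
  have hvanish : ∀ t ∉ Ioi (0 : ℝ), (t / r) ^ p * (b⁻¹ * k ((r - t) / b)) * g t = 0 := by
    intro t ht
    rw [mem_Ioi, not_lt] at ht
    have hfar : T < (r - t) / b := (lt_div_iff₀ hb).mpr (by linarith)
    rw [hk_supp _ (hfar.trans_le (le_abs_self _))]
    ring
  have hpolar : ∀ t, (t / r) ^ p * (b⁻¹ * k ((r - t) / b)) * g t
      = b⁻¹ * k ((r - t) / b) * ((r ^ p)⁻¹ * (t ^ p * g t)) := fun t => by
    rw [div_pow]; ring
  simp_rw [setIntegral_eq_integral_of_forall_compl_eq_zero hvanish, hpolar,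
    integral_inv_mul_kernel_div_mul_eq hb, mul_left_comm _ (r ^ p)⁻¹, integral_const_mul]

theorem kernel_estimator_bias_uniform_general (d : ℕ)
    (rmin rmax : ℝ) (h0 : 0 < rmin)
    (T : ℝ) (hT : 0 < T) (k : ℝ → ℝ)
    (hk_int : Integrable k)
    (hk_even : ∀ u, k (-u) = k u)
    (hk_supp : ∀ u : ℝ, T < |u| → k u = 0)
    (hk_one : (∫ u, k u) = 1)
    (g₀ : ℝ → ℝ) (hg : ContDiffOn ℝ 2 g₀ (Set.Ioi 0)) :
    ∃ b₀ > (0 : ℝ), ∃ M ≥ (0 : ℝ), ∀ b : ℝ, 0 < b → b ≤ b₀ →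
      ∀ r ∈ Set.Icc rmin rmax,
        |(∫ t in Set.Ioi (0 : ℝ), (t / r) ^ (d - 1) * (b⁻¹ * k ((r - t) / b)) * g₀ t) - g₀ r|
          ≤ M * b ^ 2 := by
  set p := d - 1
  set c := rmin / 2 with hc
  have hφ : ContDiffOn ℝ 2 (fun t => t ^ p * g₀ t) (Ioi 0) := (contDiffOn_id.pow p).mul hg
  obtain ⟨C, hC, hφ_taylor⟩ := hφ.exists_abs_sub_sub_deriv_mul_le isOpen_Ioi
    (fun x hx => (half_pos h0).trans_le hx.1) (isCompact_Icc (a := c) (b := rmax + c))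
    (convex_Icc _ _)
  refine ⟨c / T, by positivity, (rmin ^ p)⁻¹ * (C * T ^ 2 * ∫ u, |k u|), by positivity,
    fun b hb hbb₀ r hr => ?_⟩
  have hbT : b * T ≤ c := (le_div_iff₀ hT).mp hbb₀
  have hbT0 : 0 ≤ b * T := by positivity
  have hr0 : 0 < r := h0.trans_le hr.1
  have hJ : Icc (r - b * T) (r + b * T) ⊆ Icc c (rmax + c) :=
    Icc_subset_Icc (by linarith [hr.1]) (by linarith [hr.2])
  have hg₀r : g₀ r = (r ^ p)⁻¹ * (r ^ p * g₀ r) := by field_simp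
  rw [setIntegral_Ioi_pow_div_mul_kernel_eq p hb (by linarith [hr.1]) hk_supp, hg₀r, ← mul_sub,
    abs_mul, abs_of_pos (by positivity)]
  calc (r ^ p)⁻¹ * |(∫ u, k u * ((r - b * u) ^ p * g₀ (r - b * u))) - r ^ p * g₀ r|
      ≤ (rmin ^ p)⁻¹ * (C * T ^ 2 * (∫ u, |k u|) * b ^ 2) := by
        gcongr
        · exact hr.1
        · exact abs_integral_kernel_mul_comp_sub_le hb.le hC hk_int hk_even hk_supp hk_one
            (hφ.continuousOn.mono fun s hs => (half_pos h0).trans_le (hJ hs).1)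
            fun s hs => hφ_taylor r (hJ ⟨by linarith, by linarith⟩) s (hJ hs)
    _ = (rmin ^ p)⁻¹ * (C * T ^ 2 * ∫ u, |k u|) * b ^ 2 := by ring

/-- Lemma 5.2 (analytic content): uniform `O(b²)` bias bound for the polar-coordinates
kernel-smoothed integral of a `C²` function `g₀` over a compact interval `I = [r_min, r_max]`
of the positive half-line. -/
theorem kernel_estimator_bias_uniform (d : ℕ) (hd : 1 ≤ d)
    (rmin rmax : ℝ) (h0 : 0 < rmin) (hrr : rmin ≤ rmax)
    (T : ℝ) (hT : 0 < T) (k : ℝ → ℝ)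
    (hk_int : Integrable k)
    (hk_bdd : ∃ B : ℝ, ∀ u, |k u| ≤ B)
    (hk_even : ∀ u, k (-u) = k u)
    (hk_supp : ∀ u : ℝ, T < |u| → k u = 0)
    (hk_one : (∫ u, k u) = 1)
    (g₀ : ℝ → ℝ) (hg : ContDiffOn ℝ 2 g₀ (Set.Ioi 0)) :
    ∃ b₀ > (0 : ℝ), ∃ M ≥ (0 : ℝ), ∀ b : ℝ, 0 < b → b ≤ b₀ →
      ∀ r ∈ Set.Icc rmin rmax,
        |(∫ t in Set.Ioi (0 : ℝ), (t / r) ^ (d - 1) * (b⁻¹ * k ((r - t) / b)) * g₀ t) - g₀ r|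
          ≤ M * b ^ 2 :=
  kernel_estimator_bias_uniform_general d rmin rmax h0 T hT k hk_int hk_even hk_supp hk_one g₀ hg
end

section
/- Let R be a commutative ring, let α be a type with decidable equality, let S be a finite set of elements of α, and let f : α × α → R. Then (∑_{x∈S} ∑_{y∈S, y≠x} f(x,y))² = ∑_{x∈S} ∑_{y∈S, y≠x} [f(x,y)·f(x,y) + f(x,y)·f(y,x)] + ∑_{x∈S} ∑_{y∈S, y≠x} ∑_{u∈S, u≠x, u≠y} (f(x,y) + f(y,x))·(f(y,u) + f(u,y)) + ∑_{x∈S} ∑_{y∈S, y≠x} ∑_{u∈S, u≠x, u≠y} ∑_{v∈S, v≠x, v≠y, v≠u} f(x,y)·f(u,v). -/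
/-- Swapping the two outer indices in a sum over ordered pairs of distinct elements. -/
lemma sum_erase_swap {R : Type*} [AddCommMonoid R] {α : Type*} [DecidableEq α]
    (S : Finset α) (h : α → α → R) :
    ∑ x ∈ S, ∑ y ∈ S.erase x, h x y = ∑ x ∈ S, ∑ y ∈ S.erase x, h y x := by
  simp_rw [← Finset.filter_ne', Finset.sum_filter]
  rw [Finset.sum_comm]
  refine Finset.sum_congr rfl fun x _ => Finset.sum_congr rfl fun y _ => ?_
  simp only [ne_comm]

/-- Swapping the two outer indices in a triple sum over distinct elements. -/
lemma sum_erase_swap3 {R : Type*} [AddCommMonoid R] {α : Type*} [DecidableEq α]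
    (S : Finset α) (g : α → α → α → R) :
    ∑ x ∈ S, ∑ y ∈ S.erase x, ∑ u ∈ (S.erase x).erase y, g x y u
      = ∑ x ∈ S, ∑ y ∈ S.erase x, ∑ u ∈ (S.erase x).erase y, g y x u := by
  have := sum_erase_swap S (fun x y => ∑ u ∈ (S.erase x).erase y, g x y u)
  rw [this]
  refine Finset.sum_congr rfl fun x _ => Finset.sum_congr rfl fun y _ => ?_
  rw [Finset.erase_right_comm]

/-- Combinatorial decomposition of the square of a sum over ordered pairs of distinct
elements of a finite set, used in the variance computation of second-order statistics of a
point process (Lemma A.2). -/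
theorem sq_sum_pairs_decomposition {R : Type*} [CommRing R] {α : Type*} [DecidableEq α]
    (S : Finset α) (f : α × α → R) :
    (∑ x ∈ S, ∑ y ∈ S.erase x, f (x, y)) ^ 2 =
      (∑ x ∈ S, ∑ y ∈ S.erase x, (f (x, y) * f (x, y) + f (x, y) * f (y, x)))
      + (∑ x ∈ S, ∑ y ∈ S.erase x, ∑ u ∈ (S.erase x).erase y,
          (f (x, y) + f (y, x)) * (f (y, u) + f (u, y)))
      + (∑ x ∈ S, ∑ y ∈ S.erase x, ∑ u ∈ (S.erase x).erase y,
          ∑ v ∈ ((S.erase x).erase y).erase u, f (x, y) * f (u, v)) := by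
  classical
  -- Step 1: expand the square as a quadruple sum.
  have expand : (∑ x ∈ S, ∑ y ∈ S.erase x, f (x, y)) ^ 2
      = ∑ x ∈ S, ∑ y ∈ S.erase x, ∑ u ∈ S, ∑ v ∈ S.erase u, f (x, y) * f (u, v) := by
    rw [sq, Finset.sum_mul_sum]
    refine Finset.sum_congr rfl fun x hx => ?_
    simp_rw [Finset.sum_mul]
    rw [Finset.sum_comm]
    simp_rw [Finset.mul_sum]
  -- Step 2: for fixed distinct x, y, split the inner double sum by cases on u and v.
  have step : ∀ x ∈ S, ∀ y ∈ S.erase x,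
      (∑ u ∈ S, ∑ v ∈ S.erase u, f (x, y) * f (u, v))
        = (f (x, y) * f (x, y) + f (x, y) * f (y, x))
          + (∑ u ∈ (S.erase x).erase y,
              (f (x, y) * f (x, u) + f (x, y) * f (u, x)
                + f (x, y) * f (y, u) + f (x, y) * f (u, y)))
          + ∑ u ∈ (S.erase x).erase y, ∑ v ∈ ((S.erase x).erase y).erase u,
              f (x, y) * f (u, v) := by
    intro x hx y hy
    have hyS : y ∈ S := Finset.mem_of_mem_erase hy
    have hyx : y ≠ x := Finset.ne_of_mem_erase hy
    have hxy : x ∈ S.erase y := Finset.mem_erase.2 ⟨hyx.symm, hx⟩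
    -- split u = x
    rw [← Finset.add_sum_erase _ (fun u => ∑ v ∈ S.erase u, f (x, y) * f (u, v)) hx]
    -- split u = y (within S.erase x)
    rw [← Finset.add_sum_erase _ (fun u => ∑ v ∈ S.erase u, f (x, y) * f (u, v)) hy]
    -- split v = y in the u = x term
    rw [← Finset.add_sum_erase _ (fun v => f (x, y) * f (x, v)) hy]
    -- split v = x in the u = y term
    rw [← Finset.add_sum_erase _ (fun v => f (x, y) * f (y, v)) hxy]
    -- for u in the doubly-erased set, split v = x and v = y
    have inner : ∀ u ∈ (S.erase x).erase y,
        (∑ v ∈ S.erase u, f (x, y) * f (u, v))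
          = f (x, y) * f (u, x) + f (x, y) * f (u, y)
            + ∑ v ∈ ((S.erase x).erase y).erase u, f (x, y) * f (u, v) := by
      intro u hu
      have huy : u ≠ y := Finset.ne_of_mem_erase hu
      have hux : u ≠ x := Finset.ne_of_mem_erase (Finset.mem_of_mem_erase hu)
      have hxu : x ∈ S.erase u := Finset.mem_erase.2 ⟨hux.symm, hx⟩
      have hyu : y ∈ (S.erase u).erase x := Finset.mem_erase.2 ⟨hyx, Finset.mem_erase.2 ⟨huy.symm, hyS⟩⟩
      rw [← Finset.add_sum_erase _ (fun v => f (x, y) * f (u, v)) hxu]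
      rw [← Finset.add_sum_erase _ (fun v => f (x, y) * f (u, v)) hyu]
      have hset : ((S.erase u).erase x).erase y = ((S.erase x).erase y).erase u := by
        rw [Finset.erase_right_comm (a := u) (b := x), Finset.erase_right_comm (a := u) (b := y)]
      rw [hset, add_assoc]
    rw [Finset.sum_congr rfl inner]
    simp only [Finset.sum_add_distrib]
    rw [Finset.erase_right_comm (a := x) (b := y)]
    abel
  rw [expand, Finset.sum_congr rfl (fun x hx => Finset.sum_congr rfl (step x hx))]
  have h1 : ∑ x ∈ S, ∑ y ∈ S.erase x, ∑ u ∈ (S.erase x).erase y,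
      (f (x, y) * f (x, u) + f (x, y) * f (u, x))
      = ∑ x ∈ S, ∑ y ∈ S.erase x, ∑ u ∈ (S.erase x).erase y,
          (f (y, x) * f (y, u) + f (y, x) * f (u, y)) :=
    sum_erase_swap3 S (fun x y u => f (x, y) * f (x, u) + f (x, y) * f (u, x))
  simp only [mul_add, add_mul, Finset.sum_add_distrib] at h1 ⊢
  linear_combination h1
end
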